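/- Let Ỹ_α, Z̃_{α,i} be an orthonormal basis (with respect to the trace inner product) of a subspace of symmetric matrices, and suppose there exists a positive definite matrix Y = Σ_α y_α Ỹ_α ≻ 0 orthogonal to every Z̃_{α,i}. Then the set { I − Σ_{α,i} z_{α,i} Z̃_{α,i} : the matrix is positive semidefinite } is bounded in the space of symmetric matrices. -/

import Mathlib

attribute [local instance] Matrix.normedAddCommGroup

/-!
`Y₀ = ∑ y_α Ỹ_α` is orthogonal to every `Z̃_k`, so each `A = I - ∑ z_k Z̃_k` satisfies
`tr (Y₀ A) = tr Y₀`. Being positive definite, `Y₀ ⪰ c I` for some `c > 0`, hence for `A ⪰ 0`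
we get `c tr A ≤ tr (Y₀ A) = tr Y₀`. Finally every entry of a positive semidefinite matrix is
bounded by its trace.
-/

namespace Matrix

namespace PosSemidef

variable {n : Type*} [Fintype n] {A : Matrix n n ℝ}

theorem two_mul_abs_apply_le (hA : A.PosSemidef) (i j : n) :
    2 * |A i j| ≤ A i i + A j j := by
  classical
  have quad (s : ℝ) : 0 ≤ A i i + 2 * s * A i j + s * s * A j j := by
    have := hA.dotProduct_mulVec_nonneg (Pi.single i 1 + Pi.single j s)
    simp [add_dotProduct, dotProduct_add, mulVec_add, mulVec_single] at this
    have hsymm : A j i = A i j := by simpa using hA.isHermitian.apply i j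
    linear_combination this + s * hsymm
  rw [← le_div_iff₀' two_pos, abs_le]
  constructor <;> linarith [quad 1, quad (-1)]

theorem apply_le_trace (hA : A.PosSemidef) (i : n) : A i i ≤ A.trace :=
  Finset.single_le_sum (f := fun j ↦ A j j) (fun _ _ ↦ hA.diag_nonneg) (Finset.mem_univ i)

theorem norm_le_trace (hA : A.PosSemidef) : ‖A‖ ≤ A.trace :=
  (norm_le_iff hA.trace_nonneg).mpr fun i j ↦ by
    linarith [hA.two_mul_abs_apply_le i j, hA.apply_le_trace i, hA.apply_le_trace j,
      Real.norm_eq_abs (A i j)]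

open scoped MatrixOrder in
theorem trace_mul_nonneg {B : Matrix n n ℝ} (hA : A.PosSemidef) (hB : B.PosSemidef) :
    0 ≤ (A * B).trace := by
  classical
  obtain ⟨C, rfl⟩ := CStarAlgebra.nonneg_iff_eq_star_mul_self.mp hB.nonneg
  rw [star_eq_conjTranspose, ← Matrix.mul_assoc, trace_mul_cycle]
  exact (hA.mul_mul_conjTranspose_same C).trace_nonneg

end PosSemidef

namespace PosDef

variable {n : Type*} [Fintype n] [DecidableEq n] {Y : Matrix n n ℝ}

open scoped MatrixOrder in
theorem exists_pos_sub_smul_one_posSemidef (hY : Y.PosDef) :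
    ∃ c : ℝ, 0 < c ∧ (Y - c • 1).PosSemidef := by
  rcases subsingleton_or_nontrivial (Matrix n n ℝ) with h | h
  · exact ⟨1, one_pos, Subsingleton.elim 0 (Y - (1 : ℝ) • 1) ▸ .zero⟩
  simpa [Algebra.algebraMap_eq_smul_one, le_iff] using
    (CFC.exists_pos_algebraMap_le_iff hY.isHermitian).mpr
      fun _ hx ↦ hY.isStrictlyPositive.spectrum_pos hx

theorem exists_pos_mul_trace_le_trace_mul (hY : Y.PosDef) :
    ∃ c : ℝ, 0 < c ∧ ∀ A : Matrix n n ℝ, A.PosSemidef → c * A.trace ≤ (Y * A).trace := by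
  obtain ⟨c, hc, hYc⟩ := hY.exists_pos_sub_smul_one_posSemidef
  refine ⟨c, hc, fun A hA ↦ ?_⟩
  have := hYc.trace_mul_nonneg hA
  rwa [Matrix.sub_mul, trace_sub, smul_mul, Matrix.one_mul, trace_smul, smul_eq_mul,
    sub_nonneg] at this

theorem isBounded_setOf_posSemidef_trace_mul_le (hY : Y.PosDef) (t : ℝ) :
    Bornology.IsBounded {A : Matrix n n ℝ | A.PosSemidef ∧ (Y * A).trace ≤ t} := by
  obtain ⟨c, hc, hYc⟩ := hY.exists_pos_mul_trace_le_trace_mul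
  refine isBounded_iff_forall_norm_le.mpr ⟨t / c, fun A ⟨hA, hYA⟩ ↦ ?_⟩
  calc ‖A‖ ≤ A.trace := hA.norm_le_trace
    _ ≤ t / c := by rw [le_div_iff₀' hc]; exact (hYc A hA).trans hYA

end PosDef

end Matrix

theorem stmt13_general {N : ℕ} {ι κ : Type} [Fintype ι] [Fintype κ]
    (Y : ι → Matrix (Fin N) (Fin N) ℝ) (Z : κ → Matrix (Fin N) (Fin N) ℝ)
    (horthYZ : ∀ a k, (Y a * Z k).trace = 0)
    (y : ι → ℝ) (hY : (∑ a, y a • Y a).PosDef) :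
    Bornology.IsBounded {A : Matrix (Fin N) (Fin N) ℝ |
      ∃ z : κ → ℝ, A = 1 - ∑ k, z k • Z k ∧ A.PosSemidef} := by
  set Y₀ := ∑ a, y a • Y a
  have trace_mul_eq (z : κ → ℝ) : (Y₀ * (1 - ∑ k, z k • Z k)).trace = Y₀.trace := by
    simp [Y₀, Matrix.mul_sub, Matrix.mul_sum, Finset.sum_mul, Matrix.trace_sum, horthYZ]
  refine (hY.isBounded_setOf_posSemidef_trace_mul_le Y₀.trace).subset ?_
  rintro _ ⟨z, rfl, hA⟩
  exact ⟨hA, (trace_mul_eq z).le⟩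

/-- Let `{Ỹ_α} ∪ {Z̃_k}` be an orthonormal family (w.r.t. the trace inner product) of
symmetric matrices, and suppose there is a positive definite matrix `Y = Σ y_α Ỹ_α ≻ 0`
(which is then orthogonal to every `Z̃_k`).  Then the set
`{ I − Σ_k z_k Z̃_k : positive semidefinite }` is bounded in the space of symmetric
matrices. -/
theorem stmt13 {N : ℕ} {ι κ : Type} [Fintype ι] [Fintype κ] [DecidableEq ι] [DecidableEq κ]
    (Y : ι → Matrix (Fin N) (Fin N) ℝ) (Z : κ → Matrix (Fin N) (Fin N) ℝ)
    (hYsym : ∀ a, (Y a).IsSymm) (hZsym : ∀ k, (Z k).IsSymm)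
    (horthY : ∀ a a', (Y a * Y a').trace = if a = a' then 1 else 0)
    (horthZ : ∀ k k', (Z k * Z k').trace = if k = k' then 1 else 0)
    (horthYZ : ∀ a k, (Y a * Z k).trace = 0)
    (y : ι → ℝ) (hY : (∑ a, y a • Y a).PosDef) :
    Bornology.IsBounded {A : Matrix (Fin N) (Fin N) ℝ |
      ∃ z : κ → ℝ, A = 1 - ∑ k, z k • Z k ∧ A.PosSemidef} :=
  stmt13_general Y Z horthYZ y hY
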